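/- Let H = L + W with L the complete graph Laplacian on V vertices, W diagonal with unique smallest eigenvalue W_m = 0 at vertex m, and suppose the ratio of the largest to second-smallest diagonal entry of W is at most κ. Then the spectral gap γ = λ₁ − λ₀ satisfies γ ≥ g_{{m}}, where g_{{m}} = (Σ_{v≠m} φ₀(v))/φ₀(m) is the Cheeger-type ratio of the singleton cut at m with respect to the positive ground state φ₀. -/

import Mathlib

/-!
Write `H = D − J` with `D = diagonal (V + W)` and `J` the all-ones matrix. An eigenvector `ψ` of `H`
with eigenvalue `λ` satisfies `(V + W u − λ) ψ u = ∑ ψ` at every vertex. At `m` this turns the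
ground-state equation into `g_{{m}} = V − 1 − λ₀`, so it suffices to show `λ₁ ≥ V`. For
`λ < min D` (and `min D ≥ V` as `W ≥ 0`) an eigenvector is forced to be `ψ u = s / (D u − λ)` with
`s = ∑ ψ ≠ 0`, and two such vectors are never orthogonal, since all terms of `∑ ψ₀ ψ₁` have the
sign of `s₀ s₁`. Hence the rank-one perturbation `−J` pushes at most one eigenvalue below `min D`.
-/

open Matrix

/-- The `i`-th smallest eigenvalue (with multiplicity) of a Hermitian matrix. -/
noncomputable def sortedEig {n : ℕ} {A : Matrix (Fin n) (Fin n) ℝ}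
    (hA : A.IsHermitian) (i : Fin n) : ℝ :=
  hA.eigenvalues (Tuple.sort hA.eigenvalues i)

/-- The spectral gap: difference between the two lowest eigenvalues. -/
noncomputable def specGap {n : ℕ} (hn : 2 ≤ n) {A : Matrix (Fin n) (Fin n) ℝ}
    (hA : A.IsHermitian) : ℝ :=
  sortedEig hA ⟨1, by omega⟩ - sortedEig hA ⟨0, by omega⟩

/-- The combinatorial Laplacian of the complete graph on `V` vertices:
`L = V·I − J`, where `J` is the all-ones matrix. -/
def cgL (V : ℕ) : Matrix (Fin V) (Fin V) ℝ :=
  (V : ℝ) • (1 : Matrix (Fin V) (Fin V) ℝ) - Matrix.of (fun _ _ => (1 : ℝ))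

section SortedEigenvectors

variable {n : ℕ} {A : Matrix (Fin n) (Fin n) ℝ} (hA : A.IsHermitian)

noncomputable def sortedEigvec (i : Fin n) : Fin n → ℝ :=
  ⇑(hA.eigenvectorBasis (Tuple.sort hA.eigenvalues i))

lemma mulVec_sortedEigvec (i : Fin n) :
    A *ᵥ sortedEigvec hA i = sortedEig hA i • sortedEigvec hA i :=
  hA.mulVec_eigenvectorBasis _

lemma sortedEigvec_ne_zero (i : Fin n) : sortedEigvec hA i ≠ 0 := fun h =>
  hA.eigenvectorBasis.orthonormal.ne_zero _ (by ext u; exact congrFun h u)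

lemma sortedEigvec_dotProduct_eq_zero {i j : Fin n} (hij : i ≠ j) :
    sortedEigvec hA i ⬝ᵥ sortedEigvec hA j = 0 := by
  have h := hA.eigenvectorBasis.orthonormal.2 ((Tuple.sort hA.eigenvalues).injective.ne hij)
  beta_reduce at h
  rwa [EuclideanSpace.inner_eq_star_dotProduct, star_trivial, dotProduct_comm] at h

lemma sortedEig_mono : Monotone (sortedEig hA) :=
  Tuple.monotone_sort hA.eigenvalues

end SortedEigenvectors

section DiagonalSubOnes

variable {ι : Type*} [Fintype ι] {d : ι → ℝ}

lemma dotProduct_ne_zero_of_lt_diagonal {ψ φ : ι → ℝ} {μ ν : ℝ}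
    (hψ : ∀ u, (d u - μ) * ψ u = ∑ x, ψ x) (hφ : ∀ u, (d u - ν) * φ u = ∑ x, φ x)
    (hμ : ∀ u, μ < d u) (hν : ∀ u, ν < d u) (hψ0 : ψ ≠ 0) (hφ0 : φ ≠ 0) :
    ψ ⬝ᵥ φ ≠ 0 := by
  have entry_eq {χ : ι → ℝ} {c : ℝ} (hχ : ∀ u, (d u - c) * χ u = ∑ x, χ x)
      (hc : ∀ u, c < d u) (u : ι) : χ u = (∑ x, χ x) / (d u - c) := by
    rw [eq_div_iff (sub_pos.2 (hc u)).ne', mul_comm, hχ]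
  have sum_ne_zero {χ : ι → ℝ} {c : ℝ} (hχ : ∀ u, (d u - c) * χ u = ∑ x, χ x)
      (hc : ∀ u, c < d u) (hχ0 : χ ≠ 0) : ∑ x, χ x ≠ 0 := fun hs =>
    hχ0 (funext fun u => by rw [entry_eq hχ hc u, hs, zero_div, Pi.zero_apply])
  obtain ⟨u₀, -⟩ := Function.ne_iff.1 hψ0
  have hpos : 0 < ∑ u, ((d u - μ) * (d u - ν))⁻¹ :=
    Finset.sum_pos (fun u _ => inv_pos.2 (mul_pos (sub_pos.2 (hμ u)) (sub_pos.2 (hν u))))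
      ⟨u₀, Finset.mem_univ u₀⟩
  have hdot : ψ ⬝ᵥ φ = (∑ x, ψ x) * (∑ x, φ x) * ∑ u, ((d u - μ) * (d u - ν))⁻¹ := by
    rw [dotProduct, Finset.mul_sum]
    refine Finset.sum_congr rfl fun u _ => ?_
    rw [entry_eq hψ hμ u, entry_eq hφ hν u]
    field_simp
  rw [hdot]
  exact mul_ne_zero (mul_ne_zero (sum_ne_zero hψ hμ hψ0) (sum_ne_zero hφ hν hφ0)) hpos.ne'

variable [DecidableEq ι]

lemma diagonal_sub_ones_mulVec_apply (ψ : ι → ℝ) (u : ι) :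
    ((diagonal d - of fun _ _ => (1 : ℝ)) *ᵥ ψ) u = d u * ψ u - ∑ x, ψ x := by
  rw [sub_mulVec, Pi.sub_apply, mulVec_diagonal]
  simp [mulVec, dotProduct]

lemma sub_mul_eq_sum_of_mulVec_eq_smul {ψ : ι → ℝ} {μ : ℝ}
    (h : (diagonal d - of fun _ _ => (1 : ℝ)) *ᵥ ψ = μ • ψ) (u : ι) :
    (d u - μ) * ψ u = ∑ x, ψ x := by
  have hu := congrFun h u
  rw [diagonal_sub_ones_mulVec_apply, Pi.smul_apply, smul_eq_mul] at hu
  linarith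

end DiagonalSubOnes

lemma le_sortedEig_of_lt {n : ℕ} {d : Fin n → ℝ} {A : Matrix (Fin n) (Fin n) ℝ}
    (hA : A.IsHermitian) (hAd : A = diagonal d - of fun _ _ => (1 : ℝ)) {c : ℝ}
    (hc : ∀ u, c ≤ d u) {i j : Fin n} (hij : i < j) : c ≤ sortedEig hA j := by
  by_contra! hj
  have hi : sortedEig hA i < c := (sortedEig_mono hA hij.le).trans_lt hj
  have eigvec_eq (k : Fin n) :=
    sub_mul_eq_sum_of_mulVec_eq_smul (by rw [← hAd]; exact mulVec_sortedEigvec hA k)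
  exact dotProduct_ne_zero_of_lt_diagonal (eigvec_eq i) (eigvec_eq j)
    (fun u => hi.trans_le (hc u)) (fun u => hj.trans_le (hc u))
    (sortedEigvec_ne_zero hA i) (sortedEigvec_ne_zero hA j)
    (sortedEigvec_dotProduct_eq_zero hA hij.ne)

lemma cgL_add_diagonal (V : ℕ) (W : Fin V → ℝ) :
    cgL V + diagonal W = diagonal (fun u => (V : ℝ) + W u) - of fun _ _ => (1 : ℝ) := by
  ext u v
  by_cases h : u = v <;> simp [cgL, h, one_apply]
  ring

theorem gap_ge_g {V : ℕ} (hV : 2 ≤ V) (W : Fin V → ℝ) (m : Fin V)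
    (hWm : W m = 0) (hmin : ∀ u : Fin V, u ≠ m → 0 < W u)
    (hH : (cgL V + Matrix.diagonal W).IsHermitian)
    (φ₀ : Fin V → ℝ) (hpos : ∀ u, 0 < φ₀ u)
    (hEig : (cgL V + Matrix.diagonal W).mulVec φ₀ = sortedEig hH ⟨0, by omega⟩ • φ₀) :
    (∑ v ∈ Finset.univ.erase m, φ₀ v) / φ₀ m ≤ specGap hV hH := by
  have hW (u : Fin V) : 0 ≤ W u := by
    rcases eq_or_ne u m with rfl | hu
    exacts [hWm.ge, (hmin u hu).le]
  have hsecond : (V : ℝ) ≤ sortedEig hH ⟨1, by omega⟩ :=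
    le_sortedEig_of_lt hH (cgL_add_diagonal V W) (fun u => le_add_of_nonneg_right (hW u))
      (i := ⟨0, by omega⟩) (by simp [Fin.lt_def])
  have hground := sub_mul_eq_sum_of_mulVec_eq_smul (by rw [← cgL_add_diagonal]; exact hEig) m
  rw [hWm, ← Finset.add_sum_erase _ _ (Finset.mem_univ m)] at hground
  rw [div_le_iff₀ (hpos m), specGap]
  nlinarith [hpos m]
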